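/- arXiv:2304.10293 — 3 statements merged into one kernel-verified Lean document; each statement's English description precedes it below -/
import Mathlib

section
/- Let G : (0,∞) → [0,∞) be a non-increasing function and let q > 1. Then (q ∫₀^∞ σ^{q-1} G(σ) dσ)^{1/q} ≤ ∫₀^∞ G(σ)^{1/q} dσ. -/
open MeasureTheory Set Filter Topology
open scoped ENNReal NNReal

/-- A function that is antitone on `(0,∞)` and vanishes on `(-∞,0]` is measurable. -/
private lemma measurable_of_antitoneOn_Ioi {f : ℝ → ℝ} (hf : AntitoneOn f (Set.Ioi 0))
    (h0 : ∀ x : ℝ, x ≤ 0 → f x = 0) : Measurable f := by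
  apply measurable_of_Ioi
  intro c
  have hsplit : f ⁻¹' Set.Ioi c =
      (f ⁻¹' Set.Ioi c ∩ Set.Iic 0) ∪ (f ⁻¹' Set.Ioi c ∩ Set.Ioi 0) := by
    rw [← Set.inter_union_distrib_left, Set.Iic_union_Ioi, Set.inter_univ]
  rw [hsplit]
  refine MeasurableSet.union ?_ ?_
  · by_cases hc : c < 0
    · have h : f ⁻¹' Set.Ioi c ∩ Set.Iic 0 = Set.Iic 0 := by
        ext x
        simp only [Set.mem_inter_iff, Set.mem_preimage, Set.mem_Ioi, Set.mem_Iic]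
        refine ⟨fun h => h.2, fun h => ⟨?_, h⟩⟩
        rw [h0 x h]; exact hc
      rw [h]; exact measurableSet_Iic
    · have h : f ⁻¹' Set.Ioi c ∩ Set.Iic 0 = ∅ := by
        ext x
        simp only [Set.mem_inter_iff, Set.mem_preimage, Set.mem_Ioi, Set.mem_Iic,
          Set.mem_empty_iff_false, iff_false, not_and]
        intro h hx
        rw [h0 x hx] at h
        exact hc h
      rw [h]; exact MeasurableSet.empty
  · refine Set.OrdConnected.measurableSet ⟨fun x hx y hy z hz => ?_⟩
    simp only [Set.mem_inter_iff, Set.mem_preimage, Set.mem_Ioi] at hx hy ⊢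
    have hz0 : (0:ℝ) < z := lt_of_lt_of_le hx.2 hz.1
    exact ⟨lt_of_lt_of_le hy.1 (hf hz0 hy.2 hz.2), hz0⟩

/-- Layer-cake comparison: for non-increasing `G ≥ 0` on `(0,∞)` and `q > 1`,
`(q ∫₀^∞ σ^{q-1} G(σ) dσ)^{1/q} ≤ ∫₀^∞ G(σ)^{1/q} dσ`. -/
theorem stmt_0 (G : ℝ → ℝ) (hG0 : ∀ σ, 0 < σ → 0 ≤ G σ)
    (hmono : ∀ ⦃a b : ℝ⦄, 0 < a → a ≤ b → G b ≤ G a)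
    (q : ℝ) (hq : 1 < q) :
    (ENNReal.ofReal q * ∫⁻ σ in Set.Ioi (0 : ℝ), ENNReal.ofReal (σ ^ (q - 1) * G σ)) ^ (1 / q)
      ≤ ∫⁻ σ in Set.Ioi (0 : ℝ), ENNReal.ofReal (G σ) ^ (1 / q) := by
  set I := ∫⁻ σ in Set.Ioi (0 : ℝ), ENNReal.ofReal (G σ) ^ (1 / q) with hIdef
  by_cases hItop : I = ⊤
  · rw [hItop]; exact le_top
  have hq0 : (0:ℝ) < q := lt_trans one_pos hq
  have hq1 : (0:ℝ) < q - 1 := sub_pos.2 hq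
  have hiq : (0:ℝ) < 1 / q := by positivity
  -- the function g = G^{1/q} on (0,∞), 0 elsewhere
  set g : ℝ → ℝ := Set.indicator (Set.Ioi 0) (fun σ => G σ ^ (1 / q)) with hgdef
  have hg_eq : ∀ x : ℝ, 0 < x → g x = G x ^ (1 / q) := fun x hx =>
    Set.indicator_of_mem (Set.mem_Ioi.2 hx) _
  have hg_zero : ∀ x : ℝ, x ≤ 0 → g x = 0 := fun x hx =>
    Set.indicator_of_notMem (by simpa using hx) _
  have hg_nonneg : ∀ x : ℝ, 0 ≤ g x := by
    intro x
    by_cases hx : 0 < x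
    · rw [hg_eq x hx]; exact Real.rpow_nonneg (hG0 x hx) _
    · rw [hg_zero x (not_lt.1 hx)]
  have hg_anti : AntitoneOn g (Set.Ioi 0) := by
    intro a ha b hb hab
    simp only [Set.mem_Ioi] at ha hb
    rw [hg_eq a ha, hg_eq b hb]
    exact Real.rpow_le_rpow (hG0 b hb) (hmono ha hab) hiq.le
  have hgm : Measurable g := measurable_of_antitoneOn_Ioi hg_anti hg_zero
  have hIg : ∫⁻ x, ENNReal.ofReal (g x) = I := by
    have h1 : ∀ x : ℝ, ENNReal.ofReal (g x)
        = Set.indicator (Set.Ioi 0) (fun σ => ENNReal.ofReal (G σ) ^ (1 / q)) x := by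
      intro x
      by_cases hx : 0 < x
      · rw [hg_eq x hx, Set.indicator_of_mem (Set.mem_Ioi.2 hx)]
        exact (ENNReal.ofReal_rpow_of_nonneg (hG0 x hx) hiq.le).symm
      · rw [hg_zero x (not_lt.1 hx), Set.indicator_of_notMem (by simpa using not_lt.1 hx)]
        simp
    rw [hIdef, lintegral_congr h1, lintegral_indicator measurableSet_Ioi]
  have hg_int : Integrable g := by
    refine ⟨hgm.aestronglyMeasurable, ?_⟩
    rw [hasFiniteIntegral_iff_ofReal (ae_of_all _ hg_nonneg), hIg]
    exact lt_top_iff_ne_top.2 hItop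
  set Ir : ℝ := I.toReal with hIr
  have hIr_nonneg : 0 ≤ Ir := ENNReal.toReal_nonneg
  have hint_g : ∫ x, g x = Ir := by
    rw [integral_eq_lintegral_of_nonneg_ae (ae_of_all _ hg_nonneg) hgm.aestronglyMeasurable, hIg]
  -- F : the primitive of g
  set F : ℝ → ℝ := fun x => ∫ t in (0:ℝ)..x, g t with hFdef
  have hF_cont : Continuous F := hg_int.continuous_primitive 0
  have hF_nonneg : ∀ x : ℝ, 0 ≤ x → 0 ≤ F x := fun x hx =>
    intervalIntegral.integral_nonneg hx fun t _ => hg_nonneg t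
  have hF_le : ∀ x : ℝ, 0 ≤ x → F x ≤ Ir := by
    intro x hx
    show (∫ t in (0:ℝ)..x, g t) ≤ Ir
    rw [intervalIntegral.integral_of_le hx]
    calc (∫ t in Set.Ioc 0 x, g t) ≤ ∫ t, g t :=
          setIntegral_le_integral hg_int (ae_of_all _ hg_nonneg)
    _ = Ir := hint_g
  -- gR : right-continuous regularization of g
  set gR : ℝ → ℝ := fun x => if 0 < x then sSup (g '' Set.Ioi x) else 0 with hgRdef
  have hgR_pos_def : ∀ x : ℝ, 0 < x → gR x = sSup (g '' Set.Ioi x) := fun x hx => if_pos hx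
  have hbdd : ∀ x : ℝ, 0 < x → BddAbove (g '' Set.Ioi x) := by
    intro x hx
    refine ⟨g x, fun y hy => ?_⟩
    obtain ⟨τ, hτ, rfl⟩ := hy
    exact hg_anti (Set.mem_Ioi.2 hx) (Set.mem_Ioi.2 (hx.trans hτ)) (le_of_lt hτ)
  have hgR_le_g : ∀ x : ℝ, 0 < x → gR x ≤ g x := by
    intro x hx
    rw [hgR_pos_def x hx]
    refine Real.sSup_le (fun y hy => ?_) (hg_nonneg x)
    obtain ⟨τ, hτ, rfl⟩ := hy
    exact hg_anti (Set.mem_Ioi.2 hx) (Set.mem_Ioi.2 (hx.trans hτ)) (le_of_lt hτ)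
  have hg_le_gR : ∀ x τ : ℝ, 0 < x → x < τ → g τ ≤ gR x := by
    intro x τ hx hτ
    rw [hgR_pos_def x hx]
    exact le_csSup (hbdd x hx) ⟨τ, hτ, rfl⟩
  have hgR_nonneg : ∀ x : ℝ, 0 ≤ gR x := by
    intro x
    by_cases hx : 0 < x
    · exact le_trans (hg_nonneg (x+1)) (hg_le_gR x (x+1) hx (lt_add_one x))
    · rw [hgRdef]; simp [if_neg hx]
  have hgR_anti : AntitoneOn gR (Set.Ioi 0) := by
    intro a ha b hb hab
    simp only [Set.mem_Ioi] at ha hb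
    rw [hgR_pos_def b hb]
    refine Real.sSup_le (fun y hy => ?_) (hgR_nonneg a)
    obtain ⟨τ, hτ, rfl⟩ := hy
    exact hg_le_gR a τ ha (lt_of_le_of_lt hab hτ)
  have hgRm : Measurable gR :=
    measurable_of_antitoneOn_Ioi hgR_anti (fun x hx => if_neg (not_lt.2 hx))
  -- key pointwise bound : x * gR x ≤ F x
  have hkey : ∀ x : ℝ, 0 < x → x * gR x ≤ F x := by
    intro x hx
    have h1 : (∫ _ in Set.Ioc (0:ℝ) x, gR x) ≤ ∫ t in Set.Ioc 0 x, g t := by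
      refine setIntegral_mono_on (integrableOn_const (ne_of_lt ?_)) hg_int.integrableOn
        measurableSet_Ioc (fun t ht => ?_)
      · rw [Real.volume_Ioc]; exact ENNReal.ofReal_lt_top
      · exact le_trans (hgR_le_g x hx)
          (hg_anti (Set.mem_Ioi.2 ht.1) (Set.mem_Ioi.2 hx) ht.2)
    have h2 : (∫ _ in Set.Ioc (0:ℝ) x, gR x) = x * gR x := by
      rw [setIntegral_const, Real.volume_real_Ioc_of_le hx.le, smul_eq_mul, sub_zero]
    show x * gR x ≤ ∫ t in (0:ℝ)..x, g t
    rw [intervalIntegral.integral_of_le hx.le, ← h2]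
    exact h1
  -- F has right-derivative gR x at every x > 0
  have hFderiv : ∀ x : ℝ, 0 < x → HasDerivWithinAt F (gR x) (Set.Ioi x) x := by
    intro x hx
    have htendsto : Tendsto g (nhdsWithin x (Set.Ioi x)) (nhds (gR x)) := by
      rw [hgR_pos_def x hx]
      exact (hg_anti.mono (Set.Ioi_subset_Ioi hx.le)).tendsto_nhdsGT (hbdd x hx)
    have h := intervalIntegral.integral_hasDerivWithinAt_of_tendsto_ae_right
      (f := g) (a := (0:ℝ)) (b := x) (c := gR x)
      hg_int.intervalIntegrable (s := Set.Ici x) (t := Set.Ioi x)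
      ⟨Set.univ, univ_mem, hgm.aestronglyMeasurable.restrict⟩
      (htendsto.mono_left inf_le_left)
    exact h.mono Set.Ioi_subset_Ici_self
  -- the exceptional set where gR ≠ g is countable
  have hE_null : ∀ᵐ σ : ℝ, ¬(0 < σ ∧ gR σ < g σ) := by
    have hEc : Set.Countable {σ : ℝ | 0 < σ ∧ gR σ < g σ} := by
      have hsub : {σ : ℝ | 0 < σ ∧ gR σ < g σ}
          ⊆ ⋃ r : ℚ, {σ : ℝ | 0 < σ ∧ gR σ < (r:ℝ) ∧ (r:ℝ) < g σ} := by
        intro σ hσ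
        obtain ⟨r, hr1, hr2⟩ := exists_rat_btwn hσ.2
        exact Set.mem_iUnion.2 ⟨r, hσ.1, hr1, hr2⟩
      refine Set.Countable.mono hsub (Set.countable_iUnion fun r => ?_)
      refine Set.Subsingleton.countable ?_
      intro a ha b hb
      simp only [Set.mem_setOf_eq] at ha hb
      by_contra hab
      have key : ∀ a b : ℝ, (0 < a ∧ gR a < (r:ℝ) ∧ (r:ℝ) < g a) →
          (0 < b ∧ gR b < (r:ℝ) ∧ (r:ℝ) < g b) → a < b → False := by
        intro a b ha hb h
        have h1 : g b ≤ gR a := hg_le_gR a b ha.1 h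
        exact lt_irrefl (g b) (lt_of_le_of_lt h1 (lt_trans ha.2.1 hb.2.2))
      rcases lt_or_gt_of_ne hab with h | h
      · exact key a b ha hb h
      · exact key b a hb ha h
    have h0 : volume {σ : ℝ | 0 < σ ∧ gR σ < g σ} = 0 := hEc.measure_zero volume
    exact compl_mem_ae_iff.2 h0
  -- a.e. on (0,∞) : G σ = gR σ ^ q
  have hae : ∀ᵐ σ : ℝ, σ ∈ Set.Ioi (0:ℝ) →
      ENNReal.ofReal (q * (σ ^ (q-1) * G σ))
        = ENNReal.ofReal (q * (σ ^ (q-1) * gR σ ^ q)) := by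
    filter_upwards [hE_null] with σ hσE hσ
    simp only [Set.mem_Ioi] at hσ
    have hgReq : gR σ = g σ := by
      rcases lt_or_eq_of_le (hgR_le_g σ hσ) with h | h
      · exact absurd ⟨hσ, h⟩ hσE
      · exact h
    have hGq : gR σ ^ q = G σ := by
      rw [hgReq, hg_eq σ hσ, ← Real.rpow_mul (hG0 σ hσ), one_div,
        inv_mul_cancel₀ hq0.ne', Real.rpow_one]
    rw [hGq]
  -- the main estimate on compact subintervals
  have hKEY : ∀ ε b : ℝ, 0 < ε → ε ≤ b →
      (∫⁻ σ in Set.Ioc ε b, ENNReal.ofReal (q * (σ ^ (q-1) * gR σ ^ q)))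
        ≤ ENNReal.ofReal (Ir ^ q) := by
    intro ε b hε hεb
    have hb0 : (0:ℝ) < b := lt_of_lt_of_le hε hεb
    set φ : ℝ → ℝ := fun σ => q * (σ ^ (q-1) * gR σ ^ q) with hφdef
    have hφm : Measurable φ :=
      measurable_const.mul
        (((Real.continuous_rpow_const hq1.le).measurable).mul
          (((Real.continuous_rpow_const hq0.le).measurable).comp hgRm))
    have hφ_nonneg : ∀ σ : ℝ, 0 < σ → 0 ≤ φ σ := fun σ hσ =>
      mul_nonneg hq0.le (mul_nonneg (Real.rpow_nonneg hσ.le _)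
        (Real.rpow_nonneg (hgR_nonneg σ) _))
    have hbound : ∀ σ ∈ Set.Icc ε b, ‖φ σ‖ ≤ q * (b ^ (q-1) * gR ε ^ q) := by
      intro σ hσ
      have hσ0 : 0 < σ := lt_of_lt_of_le hε hσ.1
      have h1 : σ ^ (q-1) ≤ b ^ (q-1) := Real.rpow_le_rpow hσ0.le hσ.2 hq1.le
      have h2 : gR σ ^ q ≤ gR ε ^ q :=
        Real.rpow_le_rpow (hgR_nonneg σ)
          (hgR_anti (Set.mem_Ioi.2 hε) (Set.mem_Ioi.2 hσ0) hσ.1) hq0.le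
      rw [Real.norm_eq_abs, abs_of_nonneg (hφ_nonneg σ hσ0)]
      exact mul_le_mul_of_nonneg_left
        (mul_le_mul h1 h2 (Real.rpow_nonneg (hgR_nonneg σ) q)
          (Real.rpow_nonneg hb0.le _)) hq0.le
    have hφ_int : IntegrableOn φ (Set.Icc ε b) := by
      refine Integrable.mono' (g := fun _ => q * (b ^ (q-1) * gR ε ^ q))
        (integrableOn_const (ne_of_lt ?_)) hφm.aestronglyMeasurable.restrict
        ((ae_restrict_mem measurableSet_Icc).mono hbound)
      rw [Real.volume_Icc]; exact ENNReal.ofReal_lt_top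
    have hH_cont : ContinuousOn (fun x => F x ^ q) (Set.Icc ε b) :=
      (hF_cont.rpow_const (fun x => Or.inr hq0.le)).continuousOn
    have hHderiv : ∀ x ∈ Set.Ioo ε b, HasDerivWithinAt (fun y => F y ^ q)
        (q * F x ^ (q-1) * gR x) (Set.Ioi x) x := by
      intro x hx
      have hx0 : 0 < x := lt_trans hε hx.1
      have houter : HasDerivAt (fun y : ℝ => y ^ q) (q * F x ^ (q-1)) (F x) :=
        Real.hasDerivAt_rpow_const (Or.inr hq.le)
      exact houter.comp_hasDerivWithinAt x (hFderiv x hx0)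
    have hφ_le : ∀ x ∈ Set.Ioo ε b, φ x ≤ q * F x ^ (q-1) * gR x := by
      intro x hx
      have hx0 : 0 < x := lt_trans hε hx.1
      by_cases hgR0 : gR x = 0
      · simp only [hφdef, hgR0, Real.zero_rpow hq0.ne', mul_zero]
        exact le_rfl
      · have hgRpos : 0 < gR x := lt_of_le_of_ne (hgR_nonneg x) (Ne.symm hgR0)
        have h1 : (x * gR x) ^ (q-1) ≤ F x ^ (q-1) :=
          Real.rpow_le_rpow (by positivity) (hkey x hx0) hq1.le
        have h2 : x ^ (q-1) * gR x ^ q = (x * gR x) ^ (q-1) * gR x := by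
          rw [Real.mul_rpow hx0.le (hgR_nonneg x), mul_assoc,
            ← Real.rpow_add_one hgR0 (q-1), sub_add_cancel]
        show q * (x ^ (q-1) * gR x ^ q) ≤ q * F x ^ (q-1) * gR x
        rw [h2]
        calc q * ((x * gR x) ^ (q-1) * gR x) = q * (x * gR x) ^ (q-1) * gR x := by ring
          _ ≤ q * F x ^ (q-1) * gR x :=
              mul_le_mul_of_nonneg_right (mul_le_mul_of_nonneg_left h1 hq0.le) (hgR_nonneg x)
    have hFTC := intervalIntegral.integral_le_sub_of_hasDeriv_right_of_le hεb hH_cont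
      hHderiv hφ_int hφ_le
    have hHb : F b ^ q ≤ Ir ^ q :=
      Real.rpow_le_rpow (hF_nonneg b hb0.le) (hF_le b hb0.le) hq0.le
    have hHε : 0 ≤ F ε ^ q := Real.rpow_nonneg (hF_nonneg ε hε.le) q
    have hIb : (∫ y in ε..b, φ y) ≤ Ir ^ q := le_trans hFTC (by linarith)
    have hφ_nn : 0 ≤ᵐ[volume.restrict (Set.Ioc ε b)] φ := by
      filter_upwards [ae_restrict_mem measurableSet_Ioc] with σ hσ
      exact hφ_nonneg σ (lt_trans hε hσ.1)
    rw [← ofReal_integral_eq_lintegral_ofReal (hφ_int.mono_set Set.Ioc_subset_Icc_self) hφ_nn]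
    apply ENNReal.ofReal_le_ofReal
    rw [← intervalIntegral.integral_of_le hεb]
    exact hIb
  -- assemble everything
  have hmain : ENNReal.ofReal q * ∫⁻ σ in Set.Ioi (0:ℝ), ENNReal.ofReal (σ ^ (q-1) * G σ)
      ≤ ENNReal.ofReal (Ir ^ q) := by
    have h1 : ENNReal.ofReal q * ∫⁻ σ in Set.Ioi (0:ℝ), ENNReal.ofReal (σ ^ (q-1) * G σ)
        = ∫⁻ σ in Set.Ioi (0:ℝ), ENNReal.ofReal (q * (σ ^ (q-1) * G σ)) := by
      rw [← lintegral_const_mul' _ _ ENNReal.ofReal_ne_top]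
      exact lintegral_congr fun σ => (ENNReal.ofReal_mul hq0.le).symm
    have h2 : (∫⁻ σ in Set.Ioi (0:ℝ), ENNReal.ofReal (q * (σ ^ (q-1) * G σ)))
        = ∫⁻ σ in Set.Ioi (0:ℝ), ENNReal.ofReal (q * (σ ^ (q-1) * gR σ ^ q)) :=
      lintegral_congr_ae ((ae_restrict_iff' measurableSet_Ioi).2 hae)
    rw [h1, h2]
    -- monotone limit over the sets Ioc (n+1)⁻¹ (n+1)
    set f : ℝ → ℝ≥0∞ := fun σ => ENNReal.ofReal (q * (σ ^ (q-1) * gR σ ^ q)) with hfdef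
    have hfm : Measurable f :=
      (measurable_const.mul
        (((Real.continuous_rpow_const hq1.le).measurable).mul
          (((Real.continuous_rpow_const hq0.le).measurable).comp hgRm))).ennreal_ofReal
    set s : ℕ → Set ℝ := fun n => Set.Ioc ((n:ℝ)+1)⁻¹ ((n:ℝ)+1) with hsdef
    have hs_mono : ∀ m n : ℕ, m ≤ n → s m ⊆ s n := by
      intro m n hmn
      apply Set.Ioc_subset_Ioc
      · apply inv_anti₀
        · positivity
        · exact_mod_cast add_le_add_left (Nat.cast_le.2 hmn) 1
      · exact_mod_cast add_le_add_left (Nat.cast_le.2 hmn) 1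
    have hmono2 : Monotone (fun n => (s n).indicator f) := fun m n hmn =>
      Set.indicator_le_indicator_of_subset (hs_mono m n hmn) (fun a => zero_le)
    have hind : (Set.Ioi (0:ℝ)).indicator f = fun x => ⨆ n, (s n).indicator f x := by
      funext x
      by_cases hx : 0 < x
      · rw [Set.indicator_of_mem (Set.mem_Ioi.2 hx)]
        apply le_antisymm
        · obtain ⟨n, hn⟩ := exists_nat_ge (max x x⁻¹)
          have hx1 : x ≤ (n:ℝ)+1 :=
            le_trans (le_max_left x x⁻¹) (le_trans hn (by linarith))
          have hx2 : ((n:ℝ)+1)⁻¹ < x := by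
            rw [inv_lt_comm₀ (by positivity) hx]
            exact lt_of_le_of_lt (le_max_right x x⁻¹) (lt_of_le_of_lt hn (by linarith))
          have hmem : x ∈ s n := Set.mem_Ioc.2 ⟨hx2, hx1⟩
          refine le_trans (le_of_eq ?_) (le_iSup (fun n => (s n).indicator f x) n)
          exact (Set.indicator_of_mem hmem f).symm
        · exact iSup_le fun n => Set.indicator_le_self (s n) f x
      · rw [Set.indicator_of_notMem (by simpa using not_lt.1 hx)]
        have hz : ∀ n : ℕ, (s n).indicator f x = 0 := by
          intro n
          refine Set.indicator_of_notMem (fun hmem => ?_) f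
          have : (0:ℝ) < ((n:ℝ)+1)⁻¹ := by positivity
          exact absurd (lt_trans this hmem.1) hx
        simp [hz]
    calc (∫⁻ σ in Set.Ioi (0:ℝ), f σ)
        = ∫⁻ σ, (Set.Ioi (0:ℝ)).indicator f σ := (lintegral_indicator measurableSet_Ioi f).symm
      _ = ∫⁻ σ, ⨆ n, (s n).indicator f σ := by rw [hind]
      _ = ⨆ n, ∫⁻ σ, (s n).indicator f σ :=
          lintegral_iSup (fun n => hfm.indicator measurableSet_Ioc) hmono2
      _ ≤ ENNReal.ofReal (Ir ^ q) := by
          refine iSup_le fun n => ?_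
          rw [lintegral_indicator measurableSet_Ioc]
          refine hKEY _ _ (by positivity) ?_
          have h1 : (1:ℝ) ≤ (n:ℝ)+1 := by linarith [Nat.cast_nonneg (α := ℝ) n]
          calc ((n:ℝ)+1)⁻¹ ≤ 1 := by
                rw [inv_le_one_iff₀]; right; exact h1
            _ ≤ (n:ℝ)+1 := h1
  -- finish
  have hfinal := ENNReal.rpow_le_rpow hmain hiq.le
  refine le_trans hfinal ?_
  rw [ENNReal.ofReal_rpow_of_nonneg (Real.rpow_nonneg hIr_nonneg q) hiq.le,
    ← Real.rpow_mul hIr_nonneg, mul_one_div_cancel hq0.ne', Real.rpow_one,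
    ENNReal.ofReal_toReal hItop]
end

section
/- For the operator ∂²_v + v∂_x − x∂_v in ℝ², with Q = [[1,0],[0,0]] and B = [[0,−1],[1,0]], one has V(t) = π ( t²/4 + (cos(2t) − 1)/8 )^{1/2}, and the intrinsic dimensions satisfy D₀ = 4 (i.e. V(t) ≍ t² as t → 0⁺) and D_∞ = 2 (i.e. sup{α > 0 : ∫₁^∞ t^{α/2−1}/V(t) dt < ∞} = 2). -/
open MeasureTheory Matrix

noncomputable def cplxMat : ℂ →+* Matrix (Fin 2) (Fin 2) ℝ where
  toFun z := !![z.re, -z.im; z.im, z.re]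
  map_one' := by ext i j; fin_cases i <;> fin_cases j <;> simp [Matrix.one_apply]
  map_mul' z w := by
    ext i j
    fin_cases i <;> fin_cases j <;>
      simp [Matrix.mul_apply, Fin.sum_univ_two, Complex.mul_re, Complex.mul_im] <;> ring
  map_zero' := by ext i j; fin_cases i <;> fin_cases j <;> simp
  map_add' z w := by ext i j; fin_cases i <;> fin_cases j <;> simp <;> ring

lemma exp_rot (s : ℝ) :
    NormedSpace.exp (s • (!![0,-1;1,0] : Matrix (Fin 2) (Fin 2) ℝ)) =
      !![Real.cos s, -Real.sin s; Real.sin s, Real.cos s] := by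
  letI : SeminormedRing (Matrix (Fin 2) (Fin 2) ℝ) := Matrix.linftyOpSemiNormedRing
  letI : NormedRing (Matrix (Fin 2) (Fin 2) ℝ) := Matrix.linftyOpNormedRing
  letI : NormedAlgebra ℝ (Matrix (Fin 2) (Fin 2) ℝ) := Matrix.linftyOpNormedAlgebra
  have hφ : Continuous cplxMat := by
    apply continuous_matrix
    intro i j
    fin_cases i <;> fin_cases j <;> simp [cplxMat] <;> fun_prop
  have h1 : (s • (!![0,-1;1,0] : Matrix (Fin 2) (Fin 2) ℝ)) = cplxMat ((s : ℂ) * Complex.I) := by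
    ext i j; fin_cases i <;> fin_cases j <;> simp [cplxMat]
  have h2 : NormedSpace.exp ((s:ℂ) * Complex.I) = Complex.exp ((s:ℂ) * Complex.I) := by
    rw [Complex.exp_eq_exp_ℂ]
  have key := NormedSpace.map_exp cplxMat hφ ((s:ℂ) * Complex.I)
  rw [h2, Complex.exp_mul_I] at key
  have h3 : cplxMat (Complex.cos s + Complex.sin s * Complex.I) =
      !![Real.cos s, -Real.sin s; Real.sin s, Real.cos s] := by
    ext i j
    fin_cases i <;> fin_cases j <;>
      simp [cplxMat, Complex.cos_ofReal_re, Complex.sin_ofReal_re]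
  exact h1 ▸ (key.symm.trans h3)

lemma prod_rot (s : ℝ) :
    NormedSpace.exp (s • (!![0,-1;1,0] : Matrix (Fin 2) (Fin 2) ℝ)) * !![1,0;0,0] *
      NormedSpace.exp (s • (!![0,-1;1,0] : Matrix (Fin 2) (Fin 2) ℝ)ᵀ) =
      !![Real.cos s ^ 2, Real.sin s * Real.cos s;
         Real.sin s * Real.cos s, Real.sin s ^ 2] := by
  have h : (s • (!![0,-1;1,0] : Matrix (Fin 2) (Fin 2) ℝ)ᵀ) =
      (s • (!![0,-1;1,0] : Matrix (Fin 2) (Fin 2) ℝ))ᵀ := by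
    rw [Matrix.transpose_smul]
  have h2 : (!![Real.cos s, -Real.sin s; Real.sin s, Real.cos s])ᵀ =
      !![Real.cos s, Real.sin s; -Real.sin s, Real.cos s] := by
    ext i j; fin_cases i <;> fin_cases j <;> simp
  rw [h, Matrix.exp_transpose, exp_rot, h2]
  ext i j
  fin_cases i <;> fin_cases j <;>
    simp [Matrix.mul_apply, Fin.sum_univ_two] <;> ring

/-- positivity of the determinant expression for `t ≥ 1` (indeed for t > 0). -/
lemma gpos (t : ℝ) (ht : 0 < t) :
    0 < t ^ 2 / 4 + (Real.cos (2 * t) - 1) / 8 := by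
  have hid : t ^ 2 / 4 + (Real.cos (2 * t) - 1) / 8 =
      (t - Real.sin t) * (t + Real.sin t) / 4 := by
    linear_combination (1/8) * Real.cos_two_mul t + (1/4) * Real.sin_sq_add_cos_sq t
  rw [hid]
  have h1 : 0 < t - Real.sin t := sub_pos.mpr (Real.sin_lt ht)
  have h2 : 0 < t + Real.sin t := by
    rcases le_or_gt t Real.pi with hp | hp
    · have := Real.sin_nonneg_of_nonneg_of_le_pi ht.le hp
      linarith
    · have := Real.neg_one_le_sin t
      have := Real.pi_gt_three
      linarith
  positivity

/-- For `∂²_v + v∂_x - x∂_v` in `ℝ²`, with `Q = [[1,0],[0,0]]` and `B = [[0,-1],[1,0]]`: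
`V(t) = π (t²/4 + (cos 2t - 1)/8)^{1/2}`, `V(t) ≍ t²` as `t → 0⁺` (so `D₀ = 4`), and
`sup{α > 0 : ∫₁^∞ t^{α/2-1}/V(t) dt < ∞} = 2` (so `D_∞ = 2`). -/
theorem stmt_11 (Q B : Matrix (Fin 2) (Fin 2) ℝ)
    (hQ : Q = !![1, 0; 0, 0]) (hB : B = !![0, -1; 1, 0])
    (K : ℝ → Matrix (Fin 2) (Fin 2) ℝ)
    (hK : ∀ t, 0 < t → ∀ i j, K t i j = (1 / t) *
      ∫ s in Set.Ioc (0 : ℝ) t,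
        (NormedSpace.exp (s • B) * Q * NormedSpace.exp (s • Bᵀ)) i j)
    (V : ℝ → ℝ) (hV : ∀ t, 0 < t → V t = Real.pi * Real.sqrt ((t • K t).det)) :
    (∀ t, 0 < t →
      V t = Real.pi * Real.sqrt (t ^ 2 / 4 + (Real.cos (2 * t) - 1) / 8)) ∧
    (∃ c₁ c₂ δ : ℝ, 0 < c₁ ∧ 0 < c₂ ∧ 0 < δ ∧
      ∀ t ∈ Set.Ioo (0 : ℝ) δ, c₁ * t ^ 2 ≤ V t ∧ V t ≤ c₂ * t ^ 2) ∧
    sSup {α : ℝ | 0 < α ∧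
      IntegrableOn (fun t : ℝ => t ^ (α / 2 - 1) / V t) (Set.Ici 1)} = 2 := by
  subst hQ hB
  -- Part 1
  have hVf : ∀ t, 0 < t →
      V t = Real.pi * Real.sqrt (t ^ 2 / 4 + (Real.cos (2 * t) - 1) / 8) := by
    intro t ht
    have hdet : (t • K t).det = t ^ 2 / 4 + (Real.cos (2 * t) - 1) / 8 := by
      have e00 : (∫ s in Set.Ioc (0:ℝ) t,
          ((NormedSpace.exp (s • (!![0,-1;1,0] : Matrix (Fin 2) (Fin 2) ℝ)) * !![1,0;0,0] *
            NormedSpace.exp (s • (!![0,-1;1,0] : Matrix (Fin 2) (Fin 2) ℝ)ᵀ) :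
            Matrix (Fin 2) (Fin 2) ℝ) 0 0)) =
          (Real.cos t * Real.sin t + t) / 2 := by
        simp only [prod_rot]
        have : ∀ s : ℝ, (!![Real.cos s ^ 2, Real.sin s * Real.cos s;
            Real.sin s * Real.cos s, Real.sin s ^ 2] : Matrix (Fin 2) (Fin 2) ℝ) 0 0
            = Real.cos s ^ 2 := by intro s; simp
        simp only [this]
        rw [← intervalIntegral.integral_of_le ht.le, integral_cos_sq]
        simp
      have e01 : (∫ s in Set.Ioc (0:ℝ) t,
          ((NormedSpace.exp (s • (!![0,-1;1,0] : Matrix (Fin 2) (Fin 2) ℝ)) * !![1,0;0,0] *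
            NormedSpace.exp (s • (!![0,-1;1,0] : Matrix (Fin 2) (Fin 2) ℝ)ᵀ) :
            Matrix (Fin 2) (Fin 2) ℝ) 0 1)) =
          Real.sin t ^ 2 / 2 := by
        simp only [prod_rot]
        have : ∀ s : ℝ, (!![Real.cos s ^ 2, Real.sin s * Real.cos s;
            Real.sin s * Real.cos s, Real.sin s ^ 2] : Matrix (Fin 2) (Fin 2) ℝ) 0 1
            = Real.sin s * Real.cos s := by intro s; simp
        simp only [this]
        rw [← intervalIntegral.integral_of_le ht.le, integral_sin_mul_cos₁]
        simp
      have e10 : (∫ s in Set.Ioc (0:ℝ) t,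
          ((NormedSpace.exp (s • (!![0,-1;1,0] : Matrix (Fin 2) (Fin 2) ℝ)) * !![1,0;0,0] *
            NormedSpace.exp (s • (!![0,-1;1,0] : Matrix (Fin 2) (Fin 2) ℝ)ᵀ) :
            Matrix (Fin 2) (Fin 2) ℝ) 1 0)) =
          Real.sin t ^ 2 / 2 := by
        simp only [prod_rot]
        have : ∀ s : ℝ, (!![Real.cos s ^ 2, Real.sin s * Real.cos s;
            Real.sin s * Real.cos s, Real.sin s ^ 2] : Matrix (Fin 2) (Fin 2) ℝ) 1 0
            = Real.sin s * Real.cos s := by intro s; simp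
        simp only [this]
        rw [← intervalIntegral.integral_of_le ht.le, integral_sin_mul_cos₁]
        simp
      have e11 : (∫ s in Set.Ioc (0:ℝ) t,
          ((NormedSpace.exp (s • (!![0,-1;1,0] : Matrix (Fin 2) (Fin 2) ℝ)) * !![1,0;0,0] *
            NormedSpace.exp (s • (!![0,-1;1,0] : Matrix (Fin 2) (Fin 2) ℝ)ᵀ) :
            Matrix (Fin 2) (Fin 2) ℝ) 1 1)) =
          (t - Real.sin t * Real.cos t) / 2 := by
        simp only [prod_rot]
        have : ∀ s : ℝ, (!![Real.cos s ^ 2, Real.sin s * Real.cos s;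
            Real.sin s * Real.cos s, Real.sin s ^ 2] : Matrix (Fin 2) (Fin 2) ℝ) 1 1
            = Real.sin s ^ 2 := by intro s; simp
        simp only [this]
        rw [← intervalIntegral.integral_of_le ht.le, integral_sin_sq]
        simp [sub_eq_add_neg]; ring
      rw [Matrix.det_fin_two]
      simp only [Matrix.smul_apply, smul_eq_mul]
      rw [hK t ht 0 0, hK t ht 0 1, hK t ht 1 0, hK t ht 1 1, e00, e01, e10, e11]
      have ht' : t ≠ 0 := ne_of_gt ht
      have hcancel : ∀ X : ℝ, t * (1/t * X) = X := fun X => by field_simp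
      simp only [hcancel]; rw [Real.cos_two_mul]
      linear_combination (-(1 + Real.sin t ^ 2)/4) * Real.sin_sq_add_cos_sq t
    rw [hV t ht, hdet]
  have hid : ∀ t : ℝ, t ^ 2 / 4 + (Real.cos (2 * t) - 1) / 8 =
      (t - Real.sin t) * (t + Real.sin t) / 4 := fun t => by
    linear_combination (1/8) * Real.cos_two_mul t + (1/4) * Real.sin_sq_add_cos_sq t
  refine ⟨hVf, ?_, ?_⟩
  · -- Part 2 : V(t) ≍ t² near 0
    refine ⟨Real.pi / 7, Real.pi, 1, by positivity, Real.pi_pos, one_pos, ?_⟩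
    rintro t ⟨ht0, ht1⟩
    rw [hVf t ht0, hid]
    have hsb := Real.sin_bound (x := t) (by rw [abs_of_pos ht0]; exact ht1.le)
    rw [abs_of_pos ht0] at hsb
    have hsle : Real.sin t ≤ t - t^3/6 + t^4 * (5/96) := by
      have h' := abs_sub_le_iff.mp hsb
      linarith [h'.1, pow_le_pow_of_le_one ht0.le ht1.le (by norm_num : 4 ≤ 5)]
    have ht4 : t^4 ≤ t^3 := by nlinarith [mul_le_mul_of_nonneg_left ht1.le (by positivity : (0:ℝ) ≤ t^3)]
    have hlow : t^3/12 ≤ t - Real.sin t := by nlinarith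
    have hsnn : 0 ≤ Real.sin t :=
      Real.sin_nonneg_of_nonneg_of_le_pi ht0.le (by linarith [Real.pi_gt_three])
    have hup : t - Real.sin t ≤ t^3/4 := by
      have := Real.sin_gt_sub_cube ht0; linarith
    have hstl : Real.sin t ≤ t := (Real.sin_lt ht0).le
    have hprod_low : t^3/12 * t ≤ (t - Real.sin t) * (t + Real.sin t) :=
      mul_le_mul hlow (by linarith) ht0.le (by linarith)
    have hprod_up : (t - Real.sin t) * (t + Real.sin t) ≤ t^3/4 * (2*t) :=
      mul_le_mul hup (by linarith) (by linarith) (by positivity)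
    constructor
    · have h1 : (t^2/7)^2 ≤ (t - Real.sin t) * (t + Real.sin t) / 4 := by nlinarith
      have h2 : t^2/7 ≤ Real.sqrt ((t - Real.sin t) * (t + Real.sin t) / 4) := by
        rw [show (t^2/7 : ℝ) = Real.sqrt ((t^2/7)^2) from (Real.sqrt_sq (by positivity)).symm]
        exact Real.sqrt_le_sqrt h1
      calc Real.pi / 7 * t^2 = Real.pi * (t^2/7) := by ring
        _ ≤ _ := mul_le_mul_of_nonneg_left h2 Real.pi_pos.le
    · have h1 : (t - Real.sin t) * (t + Real.sin t) / 4 ≤ (t^2)^2 := by nlinarith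
      have h2 : Real.sqrt ((t - Real.sin t) * (t + Real.sin t) / 4) ≤ t^2 := by
        rw [show (t^2 : ℝ) = Real.sqrt ((t^2)^2) from (Real.sqrt_sq (by positivity)).symm]
        exact Real.sqrt_le_sqrt h1
      exact mul_le_mul_of_nonneg_left h2 Real.pi_pos.le
  · -- Part 3 : D_∞ = 2
    set g : ℝ → ℝ := fun t => t ^ 2 / 4 + (Real.cos (2 * t) - 1) / 8 with hg_def
    have hgpos : ∀ t : ℝ, 1 ≤ t → 0 < g t := fun t ht => gpos t (by linarith)
    have hVpos : ∀ t : ℝ, 1 ≤ t → 0 < V t := by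
      intro t ht
      rw [hVf t (by linarith)]
      have := Real.sqrt_pos.mpr (hgpos t ht)
      exact mul_pos Real.pi_pos this
    have hVle : ∀ t : ℝ, 1 ≤ t → V t ≤ Real.pi * (t / 2) := by
      intro t ht
      rw [hVf t (by linarith)]
      refine mul_le_mul_of_nonneg_left ?_ Real.pi_pos.le
      rw [show (t/2 : ℝ) = Real.sqrt ((t/2)^2) from (Real.sqrt_sq (by linarith)).symm]
      apply Real.sqrt_le_sqrt
      have := Real.cos_le_one (2 * t)
      nlinarith
    have hVge : ∀ t : ℝ, 2 ≤ t → Real.pi / 3 * t ≤ V t := by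
      intro t ht
      rw [hVf t (by linarith)]
      have h1 : (t/3)^2 ≤ t ^ 2 / 4 + (Real.cos (2 * t) - 1) / 8 := by
        have := Real.neg_one_le_cos (2 * t)
        nlinarith
      have h2 : t/3 ≤ Real.sqrt (t ^ 2 / 4 + (Real.cos (2 * t) - 1) / 8) := by
        rw [show (t/3 : ℝ) = Real.sqrt ((t/3)^2) from (Real.sqrt_sq (by linarith)).symm]
        exact Real.sqrt_le_sqrt h1
      calc Real.pi / 3 * t = Real.pi * (t/3) := by ring
        _ ≤ _ := mul_le_mul_of_nonneg_left h2 Real.pi_pos.le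
    -- continuity of the explicit formula
    have hcF : ∀ α : ℝ, ContinuousOn
        (fun t : ℝ => t ^ (α / 2 - 1) / (Real.pi * Real.sqrt (g t))) (Set.Ici 1) := by
      intro α
      apply ContinuousOn.div
      · intro t ht
        exact (Real.continuousAt_rpow_const t _ (Or.inl (by simp at ht; positivity))).continuousWithinAt
      · apply Continuous.continuousOn
        apply Continuous.mul continuous_const
        exact Real.continuous_sqrt.comp (by fun_prop)
      · intro t ht
        simp only [Set.mem_Ici] at ht
        have := Real.sqrt_pos.mpr (hgpos t ht)
        positivity
    have hEq : ∀ α : ℝ, Set.EqOn (fun t : ℝ => t ^ (α / 2 - 1) / (Real.pi * Real.sqrt (g t)))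
        (fun t : ℝ => t ^ (α / 2 - 1) / V t) (Set.Ici 1) := by
      intro α t ht
      simp only [Set.mem_Ici] at ht
      show t ^ (α / 2 - 1) / (Real.pi * Real.sqrt (g t)) = t ^ (α / 2 - 1) / V t
      rw [hVf t (by linarith)]
    -- membership lemma : 0 < α < 2 implies α ∈ S
    have hmem : ∀ α : ℝ, 0 < α → α < 2 → 0 < α ∧
        IntegrableOn (fun t : ℝ => t ^ (α / 2 - 1) / V t) (Set.Ici 1) := by
      intro α hα hα2
      refine ⟨hα, ?_⟩
      rw [← Set.Icc_union_Ici_eq_Ici (by norm_num : (1:ℝ) ≤ 2)]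
      apply MeasureTheory.IntegrableOn.union
      · -- compact piece
        apply MeasureTheory.IntegrableOn.congr_fun
          (((hcF α).mono (Set.Icc_subset_Ici_self)).integrableOn_compact isCompact_Icc)
          (fun t ht => hEq α (Set.Icc_subset_Ici_self ht)) measurableSet_Icc
      · -- tail piece
        rw [integrableOn_Ici_iff_integrableOn_Ioi]
        have hInt2 : IntegrableOn (fun t : ℝ => (3 / Real.pi) * t ^ (α / 2 - 2))
            (Set.Ioi (2:ℝ)) :=
          (integrableOn_Ioi_rpow_of_lt (by linarith) (by norm_num)).const_mul _
        apply MeasureTheory.Integrable.mono' hInt2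
        · exact ((((hcF α).mono (fun x hx => le_trans (by norm_num : (1:ℝ) ≤ 2)
            (le_of_lt hx) : Set.Ioi (2:ℝ) ⊆ Set.Ici 1)).aestronglyMeasurable
            measurableSet_Ioi).congr
            (Filter.eventuallyEq_of_mem (self_mem_ae_restrict measurableSet_Ioi)
              (fun t ht => hEq α (le_trans (by norm_num : (1:ℝ) ≤ 2) (le_of_lt ht)))))
        · rw [ae_restrict_iff' measurableSet_Ioi]
          filter_upwards with t ht
          have ht2 : (2:ℝ) ≤ t := le_of_lt ht
          have ht1 : (1:ℝ) ≤ t := by linarith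
          have ht0 : (0:ℝ) < t := by linarith
          have hVp := hVpos t ht1
          have hnum : (0:ℝ) ≤ t ^ (α / 2 - 1) := Real.rpow_nonneg ht0.le _
          rw [Real.norm_eq_abs, abs_of_nonneg (div_nonneg hnum hVp.le)]
          have hb : t ^ (α / 2 - 1) / V t ≤ t ^ (α / 2 - 1) / (Real.pi / 3 * t) := by
            apply div_le_div_of_nonneg_left hnum (by positivity) (hVge t ht2)
          refine hb.trans (le_of_eq ?_)
          have hr : t ^ (α / 2 - 2) = t ^ (α / 2 - 1) / t := by
            rw [show α/2 - 2 = (α/2 - 1) - 1 by ring, Real.rpow_sub ht0, Real.rpow_one]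
          rw [hr]
          have hπ : Real.pi ≠ 0 := Real.pi_ne_zero
          field_simp
    -- upper bound lemma : α ∈ S implies α < 2
    have hub : ∀ α : ℝ, 0 < α →
        IntegrableOn (fun t : ℝ => t ^ (α / 2 - 1) / V t) (Set.Ici 1) → α < 2 := by
      intro α hα hInt
      have hInt' : IntegrableOn (fun t : ℝ => t ^ (α / 2 - 1) / V t) (Set.Ioi 1) :=
        hInt.mono_set Set.Ioi_subset_Ici_self
      have hdom : IntegrableOn (fun t : ℝ => (2 / Real.pi) * t ^ (α / 2 - 2))
          (Set.Ioi (1:ℝ)) := by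
        apply MeasureTheory.Integrable.mono' hInt'
        · apply ContinuousOn.aestronglyMeasurable ?_ measurableSet_Ioi
          apply ContinuousOn.mul continuousOn_const
          intro t ht
          exact (Real.continuousAt_rpow_const t _
            (Or.inl (by simp at ht; positivity))).continuousWithinAt
        · rw [ae_restrict_iff' measurableSet_Ioi]
          filter_upwards with t ht
          have ht1 : (1:ℝ) < t := ht
          have ht0 : (0:ℝ) < t := by linarith
          have hVp := hVpos t ht1.le
          have hnum : (0:ℝ) ≤ t ^ (α / 2 - 1) := Real.rpow_nonneg ht0.le _
          have hc : (0:ℝ) ≤ (2 / Real.pi) * t ^ (α / 2 - 2) := by positivity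
          rw [Real.norm_eq_abs, abs_of_nonneg hc]
          have hb : t ^ (α / 2 - 1) / (Real.pi * (t/2)) ≤ t ^ (α / 2 - 1) / V t :=
            div_le_div_of_nonneg_left hnum hVp (hVle t ht1.le)
          refine le_trans (le_of_eq ?_) hb
          have hr : t ^ (α / 2 - 2) = t ^ (α / 2 - 1) / t := by
            rw [show α/2 - 2 = (α/2 - 1) - 1 by ring, Real.rpow_sub ht0, Real.rpow_one]
          rw [hr]
          have hπ : Real.pi ≠ 0 := Real.pi_ne_zero
          field_simp
      have hpow : IntegrableOn (fun t : ℝ => t ^ (α / 2 - 2)) (Set.Ioi (1:ℝ)) := by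
        have h2 := hdom.const_mul (Real.pi / 2)
        apply MeasureTheory.IntegrableOn.congr_fun h2 ?_ measurableSet_Ioi
        intro t ht
        have hπ : Real.pi ≠ 0 := Real.pi_ne_zero
        field_simp
      rw [integrableOn_Ioi_rpow_iff one_pos] at hpow
      linarith
    -- conclude
    apply csSup_eq_of_forall_le_of_forall_lt_exists_gt
    · exact ⟨1, hmem 1 one_pos one_lt_two⟩
    · rintro a ⟨ha, hInt⟩
      exact (hub a ha hInt).le
    · intro w hw
      refine ⟨max 1 ((w + 2) / 2), hmem _ (lt_of_lt_of_le one_pos (le_max_left _ _))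
        (max_lt one_lt_two (by linarith)), lt_max_iff.mpr (Or.inr (by linarith))⟩
end

section
/- Suppose a measurable function f : ℝ^N → ℝ satisfies ∫₀^∞ min{ G(σ)^{1/q₀}, G(σ)^{1/q∞} } dσ ≤ M, where G(σ) = |{|f| > σ}| and 1 < q₀ < q∞ < ∞. Then f can be written as f = f₁ + f₂ with |f| = |f₁| + |f₂| pointwise, ‖f₁‖_{q₀} ≤ M and ‖f₂‖_{q∞} ≤ M; in particular ‖f‖_{L^{q₀}+L^{q∞}} ≤ 2M. -/
open MeasureTheory Set ENNReal

lemma myFTC {r a : ℝ} (hr : 0 < r) (ha : 0 ≤ a) :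
    ∫ s in (0:ℝ)..a, r * s ^ (r - 1) = a ^ r := by
  rw [intervalIntegral.integral_const_mul,
    integral_rpow (Or.inl (by linarith : (-1:ℝ) < r - 1))]
  rw [sub_add_cancel, Real.zero_rpow hr.ne', sub_zero, mul_div_cancel₀ _ hr.ne']

lemma myFTC2 {r a : ℝ} (hr : 0 < r) (ha : 0 ≤ a) :
    ∫ s in (0:ℝ)..a, (a - s) * (r * s ^ (r - 1)) = a ^ (r + 1) / (r + 1) := by
  rcases eq_or_ne a 0 with rfl | ha0
  · simp [Real.zero_rpow (by positivity : r + 1 ≠ 0)]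
  have key : Set.EqOn (fun s => (a - s) * (r * s ^ (r - 1)))
      (fun s => a * (r * s ^ (r - 1)) - r * s ^ r) (Set.uIcc 0 a) := by
    intro s hs
    rcases eq_or_ne s 0 with rfl | hs0
    · simp [Real.zero_rpow hr.ne']
    · have : s ^ r = s ^ (r - 1) * s := by
        rw [← Real.rpow_add_one hs0, sub_add_cancel]
      simp only [this]; ring
  have i1 : IntervalIntegrable (fun s => a * (r * s ^ (r - 1))) volume 0 a := by
    exact ((intervalIntegral.intervalIntegrable_rpow' (by linarith)).const_mul r).const_mul a
  have i2 : IntervalIntegrable (fun s => r * s ^ r) volume 0 a := by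
    exact (intervalIntegral.intervalIntegrable_rpow' (by linarith)).const_mul r
  rw [intervalIntegral.integral_congr key, intervalIntegral.integral_sub i1 i2,
    intervalIntegral.integral_const_mul, myFTC hr ha,
    intervalIntegral.integral_const_mul,
    integral_rpow (Or.inl (by linarith : (-1:ℝ) < r)),
    Real.zero_rpow (by positivity : r + 1 ≠ 0), sub_zero]
  have har : a ^ (r + 1) = a ^ r * a := Real.rpow_add_one ha0 r
  rw [har]; field_simp; ring

lemma aux_B {ν : Measure ℝ} [IsFiniteMeasure ν] {s : ℝ} (hs : 0 < s) :
    ν {t | s < (ν (Set.Iio t)).toReal} ≤ ν Set.univ - ENNReal.ofReal s := by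
  set f : ℝ → ℝ := fun t => (ν (Set.Iio t)).toReal with hfdef
  have hfmono : Monotone f := fun x y hxy =>
    ENNReal.toReal_mono (measure_ne_top ν _) (measure_mono (Set.Iio_subset_Iio hxy))
  have hSm : MeasurableSet {t | s < f t} := hfmono.measurable measurableSet_Ioi
  have hofs : ∀ {t : ℝ}, s < f t → ENNReal.ofReal s ≤ ν (Set.Iio t) := by
    intro t ht
    calc ENNReal.ofReal s ≤ ENNReal.ofReal (f t) := ENNReal.ofReal_le_ofReal ht.le
      _ = ν (Set.Iio t) := ENNReal.ofReal_toReal (measure_ne_top _ _)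
  rcases Set.eq_empty_or_nonempty {t | s < f t} with hS | hS
  · rw [hS]; simp
  have hbdd : BddBelow {t | s < f t} := by
    by_contra hb
    have hn : ∀ n : ℕ, ENNReal.ofReal s ≤ ν (Set.Iio (-(n : ℝ))) := by
      intro n
      have : ∃ t, s < f t ∧ t < -(n : ℝ) := by
        by_contra h; push_neg at h
        exact hb ⟨-(n : ℝ), fun t ht => h t ht⟩
      obtain ⟨t, htS, htn⟩ := this
      exact (hofs htS).trans (measure_mono (Set.Iio_subset_Iio htn.le))
    have hinter : ⋂ n : ℕ, Set.Iio (-(n : ℝ)) = ∅ := by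
      ext x
      simp only [Set.mem_iInter, Set.mem_Iio, Set.mem_empty_iff_false, iff_false]
      push_neg
      obtain ⟨n, hn'⟩ := exists_nat_gt (-x)
      exact ⟨n, by linarith⟩
    have hanti : Antitone fun n : ℕ => Set.Iio (-(n : ℝ)) := fun m n hmn =>
      Set.Iio_subset_Iio (by exact_mod_cast neg_le_neg (by exact_mod_cast hmn))
    have hmeas := Directed.measure_iInter (μ := ν)
      (fun n : ℕ => (measurableSet_Iio (a := -(n : ℝ))).nullMeasurableSet)
      hanti.directed_ge ⟨0, measure_ne_top _ _⟩
    rw [hinter, measure_empty] at hmeas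
    have : ENNReal.ofReal s ≤ 0 := hmeas ▸ le_iInf hn
    simp only [nonpos_iff_eq_zero, ENNReal.ofReal_eq_zero] at this
    linarith
  set u := sInf {t | s < f t} with hu
  by_cases huS : s < f u
  · -- u ∈ S; use Iio u
    have h1 : ENNReal.ofReal s ≤ ν (Set.Iio u) := hofs huS
    have h2 : {t | s < f t} ⊆ Set.Ici u := fun t ht => csInf_le hbdd ht
    have key : ENNReal.ofReal s + ν {t | s < f t} ≤ ν Set.univ := by
      calc ENNReal.ofReal s + ν {t | s < f t} ≤ ν (Set.Iio u) + ν (Set.Ici u) :=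
            add_le_add h1 (measure_mono h2)
        _ = ν (Set.Iio u ∪ Set.Ici u) := (measure_union (Set.Iio_disjoint_Ici le_rfl)
              measurableSet_Ici).symm
        _ = ν Set.univ := by rw [Set.Iio_union_Ici]
    exact ENNReal.le_sub_of_add_le_left ENNReal.ofReal_ne_top key
  · -- u ∉ S; use Iic u
    have h2 : {t | s < f t} ⊆ Set.Ioi u := by
      intro t ht
      rcases lt_or_eq_of_le (csInf_le hbdd ht) with h | h
      · exact h
      · subst h; exact absurd ht huS
    have hIic : Set.Iic u = ⋂ n : ℕ, Set.Iio (u + 1 / ((n : ℝ) + 1)) := by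
      ext x
      simp only [Set.mem_Iic, Set.mem_iInter, Set.mem_Iio]
      constructor
      · intro hx n; have : (0:ℝ) < 1 / ((n : ℝ) + 1) := by positivity
        linarith
      · intro hx
        by_contra hux
        push_neg at hux
        obtain ⟨n, hn'⟩ := exists_nat_one_div_lt (sub_pos.mpr hux)
        have := hx n
        linarith
    have hmem : ∀ n : ℕ, ENNReal.ofReal s ≤ ν (Set.Iio (u + 1 / ((n : ℝ) + 1))) := by
      intro n
      have hpos : u < u + 1 / ((n : ℝ) + 1) := by
        have : (0:ℝ) < 1 / ((n : ℝ) + 1) := by positivity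
        linarith
      obtain ⟨t, htS, htu⟩ := (csInf_lt_iff hbdd hS).mp (hu ▸ hpos)
      exact (hofs htS).trans (measure_mono (Set.Iio_subset_Iio htu.le))
    have hanti : Antitone fun n : ℕ => Set.Iio (u + 1 / ((n : ℝ) + 1)) := by
      intro m n hmn
      apply Set.Iio_subset_Iio
      have : (1 : ℝ) / ((n : ℝ) + 1) ≤ 1 / ((m : ℝ) + 1) := by
        apply one_div_le_one_div_of_le (by positivity)
        exact_mod_cast add_le_add_left (Nat.cast_le.mpr hmn) 1
      linarith
    have h1 : ENNReal.ofReal s ≤ ν (Set.Iic u) := by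
      rw [hIic, Directed.measure_iInter
        (fun n => (measurableSet_Iio).nullMeasurableSet) hanti.directed_ge
        ⟨0, measure_ne_top _ _⟩]
      exact le_iInf hmem
    have key : ENNReal.ofReal s + ν {t | s < f t} ≤ ν Set.univ := by
      calc ENNReal.ofReal s + ν {t | s < f t} ≤ ν (Set.Iic u) + ν (Set.Ioi u) :=
            add_le_add h1 (measure_mono h2)
        _ = ν (Set.Iic u ∪ Set.Ioi u) := (measure_union (Set.Iic_disjoint_Ioi le_rfl)
              measurableSet_Ioi).symm
        _ = ν Set.univ := by rw [Set.Iic_union_Ioi]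
    exact ENNReal.le_sub_of_add_le_left ENNReal.ofReal_ne_top key

lemma aux_C {ν : Measure ℝ} [IsFiniteMeasure ν] {r : ℝ} (hr : 0 < r) :
    ENNReal.ofReal (r + 1) * ∫⁻ t, (ν (Set.Iio t)) ^ r ∂ν ≤ (ν Set.univ) ^ (r + 1) := by
  set f : ℝ → ℝ := fun t => (ν (Set.Iio t)).toReal with hfdef
  have hfmono : Monotone f := fun x y hxy =>
    ENNReal.toReal_mono (measure_ne_top ν _) (measure_mono (Set.Iio_subset_Iio hxy))
  have hfm : Measurable f := hfmono.measurable
  have hlc := lintegral_comp_eq_lintegral_meas_lt_mul ν (f := f)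
    (g := fun s => r * s ^ (r - 1))
    (Filter.Eventually.of_forall fun t => ENNReal.toReal_nonneg)
    hfm.aemeasurable
    (fun t _ => (intervalIntegral.intervalIntegrable_rpow' (by linarith)).const_mul r)
    (by
      filter_upwards [self_mem_ae_restrict measurableSet_Ioi] with t ht
      have : (0:ℝ) < t := ht
      positivity)
  have hL : ∫⁻ t, ENNReal.ofReal (∫ s in (0:ℝ)..f t, r * s ^ (r - 1)) ∂ν
      = ∫⁻ t, (ν (Set.Iio t)) ^ r ∂ν := by
    congr 1
    funext t
    rw [myFTC hr ENNReal.toReal_nonneg]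
    rw [ENNReal.toReal_rpow, ENNReal.ofReal_toReal
      (ENNReal.rpow_ne_top_of_nonneg hr.le (measure_ne_top _ _))]
  rw [hL] at hlc
  rw [hlc]
  set A := ν Set.univ with hAdef
  set a := A.toReal with hadef
  have hA : A = ENNReal.ofReal a := (ENNReal.ofReal_toReal (measure_ne_top _ _)).symm
  have ha : 0 ≤ a := ENNReal.toReal_nonneg
  -- bound the integrand
  have step1 : ∫⁻ s in Set.Ioi (0:ℝ), ν {t | s < f t} * ENNReal.ofReal (r * s ^ (r - 1))
      ≤ ∫⁻ s in Set.Ioi (0:ℝ), ENNReal.ofReal ((a - s) * (r * s ^ (r - 1))) := by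
    apply setLIntegral_mono' measurableSet_Ioi
    intro s hs
    have hs' : (0:ℝ) < s := hs
    have hw : (0:ℝ) ≤ r * s ^ (r - 1) := by positivity
    calc ν {t | s < f t} * ENNReal.ofReal (r * s ^ (r - 1))
        ≤ (A - ENNReal.ofReal s) * ENNReal.ofReal (r * s ^ (r - 1)) :=
          mul_le_mul_left (aux_B hs') _
      _ = ENNReal.ofReal ((a - s) * (r * s ^ (r - 1))) := by
          rw [hA, ← ENNReal.ofReal_sub _ hs'.le, ENNReal.ofReal_mul' hw]
  -- compute the RHS integral
  have step2 : ∫⁻ s in Set.Ioi (0:ℝ), ENNReal.ofReal ((a - s) * (r * s ^ (r - 1)))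
      = ENNReal.ofReal (a ^ (r + 1) / (r + 1)) := by
    have hsplit : Set.Ioi (0:ℝ) = Set.Ioc 0 a ∪ Set.Ioi a := (Set.Ioc_union_Ioi_eq_Ioi ha).symm
    rw [hsplit, lintegral_union measurableSet_Ioi (Set.Ioc_disjoint_Ioi le_rfl)]
    have hz : ∫⁻ s in Set.Ioi a, ENNReal.ofReal ((a - s) * (r * s ^ (r - 1))) = 0 := by
      rw [setLIntegral_congr_fun measurableSet_Ioi
        (fun s hs => ?_), lintegral_zero]
      have hs' : a < s := hs
      have h1 : a - s ≤ 0 := by linarith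
      have h2 : (0:ℝ) ≤ r * s ^ (r - 1) := by
        have : (0:ℝ) < s := lt_of_le_of_lt ha hs'
        positivity
      rw [ENNReal.ofReal_eq_zero.mpr (mul_nonpos_of_nonpos_of_nonneg h1 h2)]
    rw [hz, add_zero]
    have hint : IntegrableOn (fun s => (a - s) * (r * s ^ (r - 1))) (Set.Ioc 0 a) volume := by
      have i1 : IntervalIntegrable (fun s => a * (r * s ^ (r - 1))) volume 0 a :=
        ((intervalIntegral.intervalIntegrable_rpow' (by linarith)).const_mul r).const_mul a
      have i2 : IntervalIntegrable (fun s => r * s ^ r) volume 0 a :=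
        (intervalIntegral.intervalIntegrable_rpow' (by linarith)).const_mul r
      have h12 := (intervalIntegrable_iff_integrableOn_Ioc_of_le ha).mp (i1.sub i2)
      apply h12.congr_fun ?_ measurableSet_Ioc
      intro s hs
      have hs0 : s ≠ 0 := ne_of_gt hs.1
      have : s ^ r = s ^ (r - 1) * s := by
        rw [← Real.rpow_add_one hs0, sub_add_cancel]
      simp only [this]; ring
    rw [← ofReal_integral_eq_lintegral_ofReal hint
      (by
        filter_upwards [self_mem_ae_restrict measurableSet_Ioc] with s hs
        have h1 : (0:ℝ) ≤ a - s := by linarith [hs.2]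
        have h2 : (0:ℝ) ≤ r * s ^ (r - 1) := by have := hs.1; positivity
        exact mul_nonneg h1 h2)]
    rw [← intervalIntegral.integral_of_le ha, myFTC2 hr ha]
  calc ENNReal.ofReal (r + 1) *
        ∫⁻ s in Set.Ioi (0:ℝ), ν {t | s < f t} * ENNReal.ofReal (r * s ^ (r - 1))
      ≤ ENNReal.ofReal (r + 1) * ENNReal.ofReal (a ^ (r + 1) / (r + 1)) := by
        rw [← step2]; exact mul_le_mul_right step1 _
    _ = ENNReal.ofReal ((r + 1) * (a ^ (r + 1) / (r + 1))) :=
        (ENNReal.ofReal_mul (by linarith)).symm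
    _ = ENNReal.ofReal (a ^ (r + 1)) := by
        rw [mul_div_cancel₀ _ (by linarith : r + 1 ≠ 0)]
    _ = A ^ (r + 1) := by
        rw [hA, ENNReal.ofReal_rpow_of_nonneg ha (by linarith)]

lemma aux_key {α : Type*} [MeasurableSpace α] (μ : Measure α) {g : α → ℝ}
    (hg : Measurable g) {q : ℝ} (hq : 1 < q) :
    eLpNorm g (ENNReal.ofReal q) μ ≤ ∫⁻ t in Set.Ioi (0:ℝ), (μ {x | t < |g x|}) ^ (1 / q) := by
  have hq0 : (0:ℝ) < q := by linarith
  set D : ℝ → ℝ≥0∞ := fun t => μ {x | t < |g x|} with hDdef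
  set h : ℝ → ℝ≥0∞ := fun t => D t ^ (1 / q) with hhdef
  set I := ∫⁻ t in Set.Ioi (0:ℝ), h t with hIdef
  rcases eq_or_ne I ⊤ with hI | hI
  · rw [hI]; exact le_top
  have hDanti : Antitone D := fun t₁ t₂ ht =>
    measure_mono (fun x hx => lt_of_le_of_lt ht hx)
  have hhanti : Antitone h := fun t₁ t₂ ht =>
    ENNReal.rpow_le_rpow (hDanti ht) (by positivity)
  have hhm : Measurable h := hhanti.measurable
  set ν : Measure ℝ := (volume.restrict (Set.Ioi 0)).withDensity h with hνdef
  have hνuniv : ν Set.univ = I := by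
    rw [hνdef, withDensity_apply _ MeasurableSet.univ, Measure.restrict_univ]
  have : IsFiniteMeasure ν := ⟨by rw [hνuniv]; exact lt_top_iff_ne_top.mpr hI⟩
  have hF : ∀ t : ℝ, ν (Set.Iio t) = ∫⁻ s in Set.Ioo 0 t, h s := by
    intro t
    rw [hνdef, withDensity_apply _ measurableSet_Iio,
      Measure.restrict_restrict measurableSet_Iio, Set.Iio_inter_Ioi]
  have stepA : ∀ t : ℝ, 0 < t → ENNReal.ofReal t * h t ≤ ν (Set.Iio t) := by
    intro t ht
    rw [hF t]
    calc ENNReal.ofReal t * h t = h t * volume (Set.Ioo 0 t) := by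
          rw [Real.volume_Ioo, sub_zero, mul_comm]
      _ = ∫⁻ _ in Set.Ioo 0 t, h t := (setLIntegral_const _ _).symm
      _ ≤ ∫⁻ s in Set.Ioo 0 t, h s :=
          setLIntegral_mono' measurableSet_Ioo fun s hs => hhanti hs.2.le
  -- rewrite eLpNorm
  have hp0 : ENNReal.ofReal q ≠ 0 := by
    simp only [ne_eq, ENNReal.ofReal_eq_zero, not_le]; exact hq0
  rw [eLpNorm_eq_lintegral_rpow_enorm_toReal hp0 ENNReal.ofReal_ne_top,
    ENNReal.toReal_ofReal hq0.le]
  suffices hmain : ∫⁻ x, (‖g x‖₊ : ℝ≥0∞) ^ q ∂μ ≤ I ^ q by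
    calc (∫⁻ x, (‖g x‖₊ : ℝ≥0∞) ^ q ∂μ) ^ (1 / q) ≤ (I ^ q) ^ (1 / q) :=
          ENNReal.rpow_le_rpow hmain (by positivity)
      _ = I := by
          rw [← ENNReal.rpow_mul, mul_one_div_cancel hq0.ne', ENNReal.rpow_one]
  -- layer cake
  have hlc := lintegral_comp_eq_lintegral_meas_lt_mul μ (f := fun x => |g x|)
    (g := fun s => q * s ^ (q - 1))
    (Filter.Eventually.of_forall fun x => abs_nonneg _)
    hg.abs.aemeasurable
    (fun t _ => (intervalIntegral.intervalIntegrable_rpow' (by linarith)).const_mul q)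
    (by
      filter_upwards [self_mem_ae_restrict measurableSet_Ioi] with t ht
      have : (0:ℝ) < t := ht
      positivity)
  have hL : ∫⁻ x, ENNReal.ofReal (∫ s in (0:ℝ)..|g x|, q * s ^ (q - 1)) ∂μ
      = ∫⁻ x, (‖g x‖₊ : ℝ≥0∞) ^ q ∂μ := by
    congr 1
    funext x
    rw [myFTC hq0 (abs_nonneg _), ← ENNReal.ofReal_rpow_of_nonneg (abs_nonneg _) hq0.le,
      ← Real.enorm_eq_ofReal_abs, enorm_eq_nnnorm]
  rw [hL] at hlc
  rw [hlc]
  -- pointwise bound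
  have hsplit : ∀ x : ℝ≥0∞, x ^ q = x ^ (q - 1) * x := by
    intro x
    rcases eq_or_ne x 0 with rfl | hx0
    · rw [ENNReal.zero_rpow_of_pos (by linarith), mul_zero]
    rcases eq_or_ne x ⊤ with rfl | hxt
    · rw [ENNReal.top_rpow_of_pos (by linarith), ENNReal.top_rpow_of_pos (by linarith),
        ENNReal.top_mul_top]
    · conv_lhs => rw [show q = (q - 1) + 1 by ring]
      rw [ENNReal.rpow_add _ _ hx0 hxt, ENNReal.rpow_one]
  have hDh : ∀ s : ℝ, D s = h s ^ q := by
    intro s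
    rw [hhdef]
    simp only
    rw [← ENNReal.rpow_mul, one_div_mul_cancel hq0.ne', ENNReal.rpow_one]
  have hpt : ∀ s ∈ Set.Ioi (0:ℝ),
      D s * ENNReal.ofReal (q * s ^ (q - 1))
        ≤ ENNReal.ofReal q * ((ν (Set.Iio s)) ^ (q - 1) * h s) := by
    intro s hs
    have hs' : (0:ℝ) < s := hs
    have e1 : ENNReal.ofReal (q * s ^ (q - 1))
        = ENNReal.ofReal q * (ENNReal.ofReal s) ^ (q - 1) := by
      rw [ENNReal.ofReal_mul hq0.le, ENNReal.ofReal_rpow_of_pos hs']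
    calc D s * ENNReal.ofReal (q * s ^ (q - 1))
        = ENNReal.ofReal q * ((ENNReal.ofReal s * h s) ^ (q - 1) * h s) := by
          rw [hDh s, hsplit (h s), e1, ENNReal.mul_rpow_of_nonneg _ _ (by linarith : (0:ℝ) ≤ q - 1)]
          ring
      _ ≤ ENNReal.ofReal q * ((ν (Set.Iio s)) ^ (q - 1) * h s) := by
          apply mul_le_mul_right
          apply mul_le_mul_left
          exact ENNReal.rpow_le_rpow (stepA s hs') (by linarith)
  calc ∫⁻ s in Set.Ioi (0:ℝ), D s * ENNReal.ofReal (q * s ^ (q - 1))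
      ≤ ∫⁻ s in Set.Ioi (0:ℝ), ENNReal.ofReal q * ((ν (Set.Iio s)) ^ (q - 1) * h s) :=
        setLIntegral_mono' measurableSet_Ioi hpt
    _ = ENNReal.ofReal q * ∫⁻ s in Set.Ioi (0:ℝ), (ν (Set.Iio s)) ^ (q - 1) * h s := by
        rw [lintegral_const_mul]
        apply Measurable.mul _ hhm
        have hm : Monotone fun s : ℝ => (ν (Set.Iio s)) ^ (q - 1) := fun s₁ s₂ hss =>
          ENNReal.rpow_le_rpow (measure_mono (Set.Iio_subset_Iio hss)) (by linarith)
        exact hm.measurable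
    _ = ENNReal.ofReal q * ∫⁻ s, (ν (Set.Iio s)) ^ (q - 1) ∂ν := by
        congr 1
        have hm : Measurable fun s : ℝ => (ν (Set.Iio s)) ^ (q - 1) := by
          have hm' : Monotone fun s : ℝ => (ν (Set.Iio s)) ^ (q - 1) := fun s₁ s₂ hss =>
            ENNReal.rpow_le_rpow (measure_mono (Set.Iio_subset_Iio hss)) (by linarith)
          exact hm'.measurable
        rw [hνdef, lintegral_withDensity_eq_lintegral_mul _ hhm hm]
        exact lintegral_congr fun s => by rw [Pi.mul_apply, mul_comm]
    _ ≤ (ν Set.univ) ^ q := by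
        have := aux_C (ν := ν) (r := q - 1) (by linarith)
        rwa [sub_add_cancel] at this
    _ = I ^ q := by rw [hνuniv]

/-- If `∫₀^∞ min{G(σ)^{1/q₀}, G(σ)^{1/q∞}} dσ ≤ M` with `G(σ) = |{|f| > σ}|` and
`1 < q₀ < q∞ < ∞`, then `f = f₁ + f₂` with `|f| = |f₁| + |f₂|`, `‖f₁‖_{q₀} ≤ M` and
`‖f₂‖_{q∞} ≤ M`; in particular `‖f‖_{L^{q₀}+L^{q∞}} ≤ 2M`. -/
theorem stmt_12 (N : ℕ) (f : (Fin N → ℝ) → ℝ) (hf : Measurable f)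
    (q₀ qi : ℝ) (hq₀ : 1 < q₀) (hqi : q₀ < qi)
    (M : ENNReal)
    (hM : ∫⁻ σ in Set.Ioi (0 : ℝ),
        min ((volume {X | σ < |f X|}) ^ (1 / q₀)) ((volume {X | σ < |f X|}) ^ (1 / qi))
      ≤ M) :
    ∃ f₁ f₂ : (Fin N → ℝ) → ℝ,
      f = f₁ + f₂ ∧ (∀ X, |f X| = |f₁ X| + |f₂ X|) ∧
      eLpNorm f₁ (ENNReal.ofReal q₀) volume ≤ M ∧
      eLpNorm f₂ (ENNReal.ofReal qi) volume ≤ M := by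
  have hq₀0 : (0:ℝ) < q₀ := by linarith
  have hqi1 : (1:ℝ) < qi := by linarith
  have hqi0 : (0:ℝ) < qi := by linarith
  have hinv : 1 / qi ≤ 1 / q₀ := one_div_le_one_div_of_le hq₀0 (by linarith)
  set G : ℝ → ℝ≥0∞ := fun σ => volume {X | σ < |f X|} with hGdef
  have hGanti : Antitone G := fun t₁ t₂ ht =>
    measure_mono fun x hx => lt_of_le_of_lt ht hx
  set S : Set ℝ := {σ | 0 < σ ∧ 1 < G σ} with hSdef
  by_cases hbdd : BddAbove S
  · -- main case
    set s₀ := sSup S with hs₀def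
    have hs₀ : 0 ≤ s₀ := by
      rcases S.eq_empty_or_nonempty with hS | hS
      · rw [hs₀def, hS, Real.sSup_empty]
      · obtain ⟨σ, hσ⟩ := hS
        exact le_trans hσ.1.le (le_csSup hbdd hσ)
    have hupper : ∀ σ, s₀ < σ → G σ ≤ 1 := by
      intro σ hσ
      by_contra hc
      push_neg at hc
      have : σ ∈ S := ⟨lt_of_le_of_lt hs₀ hσ, hc⟩
      exact absurd (le_csSup hbdd this) (not_le.mpr hσ)
    have hlower : ∀ σ, 0 < σ → σ < s₀ → 1 < G σ := by
      intro σ hσ0 hσs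
      have hSne : S.Nonempty := by
        rcases S.eq_empty_or_nonempty with hS | hS
        · rw [hs₀def, hS, Real.sSup_empty] at hσs; linarith
        · exact hS
      obtain ⟨τ, hτ, hστ⟩ := exists_lt_of_lt_csSup hSne hσs
      exact lt_of_lt_of_le hτ.2 (hGanti hστ.le)
    have hGs₀ : G s₀ ≤ 1 := by
      have hun : {X : Fin N → ℝ | s₀ < |f X|}
          = ⋃ n : ℕ, {X | s₀ + 1 / ((n:ℝ) + 1) < |f X|} := by
        ext x
        simp only [Set.mem_setOf_eq, Set.mem_iUnion]
        constructor
        · intro hx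
          obtain ⟨n, hn⟩ := exists_nat_one_div_lt (sub_pos.mpr hx)
          exact ⟨n, by linarith⟩
        · rintro ⟨n, hn⟩
          have : (0:ℝ) < 1 / ((n:ℝ) + 1) := by positivity
          linarith
      have hmono : Monotone fun n : ℕ => {X : Fin N → ℝ | s₀ + 1 / ((n:ℝ) + 1) < |f X|} := by
        intro m n hmn
        have : (1 : ℝ) / ((n : ℝ) + 1) ≤ 1 / ((m : ℝ) + 1) := by
          apply one_div_le_one_div_of_le (by positivity)
          exact_mod_cast add_le_add_left (Nat.cast_le.mpr hmn) 1
        intro x hx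
        simp only [Set.mem_setOf_eq] at hx ⊢
        linarith
      calc G s₀ = ⨆ n : ℕ, volume {X : Fin N → ℝ | s₀ + 1 / ((n:ℝ) + 1) < |f X|} := by
            rw [hGdef]; simp only; rw [hun]
            exact hmono.measure_iUnion
        _ ≤ 1 := by
            apply iSup_le
            intro n
            apply hupper
            have : (0:ℝ) < 1 / ((n:ℝ) + 1) := by positivity
            linarith
    set E : Set (Fin N → ℝ) := {X | s₀ < |f X|} with hEdef
    have hE : MeasurableSet E := measurableSet_lt measurable_const hf.abs
    refine ⟨E.indicator f, Eᶜ.indicator f, ?_, ?_, ?_, ?_⟩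
    · exact (Set.indicator_self_add_compl E f).symm
    · intro X
      by_cases hX : X ∈ E
      · simp [Set.indicator_of_mem hX, Set.indicator_of_notMem (by simpa using hX : X ∉ Eᶜ)]
      · simp [Set.indicator_of_notMem hX, Set.indicator_of_mem (by simpa using hX : X ∈ Eᶜ)]
    · -- f₁ bound
      refine le_trans (aux_key volume (hf.indicator hE) hq₀) (le_trans ?_ hM)
      apply setLIntegral_mono' measurableSet_Ioi
      intro t ht
      have ht' : (0:ℝ) < t := ht
      have hsub : {x | t < |E.indicator f x|} ⊆ {x | t < |f x|} ∩ E := by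
        intro x hx
        simp only [Set.mem_setOf_eq] at hx
        by_cases hxE : x ∈ E
        · rw [Set.indicator_of_mem hxE] at hx
          exact ⟨hx, hxE⟩
        · rw [Set.indicator_of_notMem hxE] at hx
          simp at hx; linarith
      have hD1 : volume {x | t < |E.indicator f x|} ≤ G t :=
        le_trans (measure_mono hsub) (measure_mono Set.inter_subset_left)
      have hD2 : volume {x | t < |E.indicator f x|} ≤ 1 :=
        le_trans (le_trans (measure_mono hsub) (measure_mono Set.inter_subset_right)) hGs₀
      apply le_min
      · exact ENNReal.rpow_le_rpow hD1 (by positivity)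
      · calc volume {x | t < |E.indicator f x|} ^ (1 / q₀)
            ≤ volume {x | t < |E.indicator f x|} ^ (1 / qi) :=
              ENNReal.rpow_le_rpow_of_exponent_ge hD2 hinv
          _ ≤ G t ^ (1 / qi) := ENNReal.rpow_le_rpow hD1 (by positivity)
    · -- f₂ bound
      refine le_trans (aux_key volume (hf.indicator hE.compl) hqi1) (le_trans ?_ hM)
      apply setLIntegral_mono' measurableSet_Ioi
      intro t ht
      have ht' : (0:ℝ) < t := ht
      by_cases hts : t < s₀
      · have hG1 : 1 < G t := hlower t ht' hts
        have hsub : {x | t < |Eᶜ.indicator f x|} ⊆ {x | t < |f x|} := by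
          intro x hx
          simp only [Set.mem_setOf_eq] at hx ⊢
          by_cases hxE : x ∈ Eᶜ
          · rwa [Set.indicator_of_mem hxE] at hx
          · rw [Set.indicator_of_notMem hxE] at hx
            simp at hx; linarith
        have hD1 : volume {x | t < |Eᶜ.indicator f x|} ≤ G t := measure_mono hsub
        apply le_min
        · calc volume {x | t < |Eᶜ.indicator f x|} ^ (1 / qi)
              ≤ G t ^ (1 / qi) := ENNReal.rpow_le_rpow hD1 (by positivity)
            _ ≤ G t ^ (1 / q₀) := ENNReal.rpow_le_rpow_of_exponent_le hG1.le hinv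
        · exact ENNReal.rpow_le_rpow hD1 (by positivity)
      · push_neg at hts
        have hempty : {x | t < |Eᶜ.indicator f x|} = ∅ := by
          ext x
          simp only [Set.mem_setOf_eq, Set.mem_empty_iff_false, iff_false, not_lt]
          by_cases hxE : x ∈ Eᶜ
          · rw [Set.indicator_of_mem hxE]
            have : ¬ s₀ < |f x| := hxE
            push_neg at this
            linarith
          · rw [Set.indicator_of_notMem hxE]
            simp; linarith
        rw [hempty, measure_empty, ENNReal.zero_rpow_of_pos (by positivity)]
        exact zero_le
  · -- degenerate case : M = ⊤
    have hMtop : M = ⊤ := by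
      rw [← top_le_iff]
      refine le_trans ?_ hM
      have hone : ∀ σ ∈ Set.Ioi (0:ℝ),
          1 ≤ min (G σ ^ (1 / q₀)) (G σ ^ (1 / qi)) := by
        intro σ hσ
        obtain ⟨τ, hτS, hστ⟩ := not_bddAbove_iff.mp hbdd σ
        have h1 : 1 ≤ G σ := le_trans hτS.2.le (hGanti hστ.le)
        exact le_min (ENNReal.one_le_rpow h1 (by positivity))
          (ENNReal.one_le_rpow h1 (by positivity))
      calc (⊤ : ℝ≥0∞) = volume (Set.Ioi (0:ℝ)) := Real.volume_Ioi.symm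
        _ = ∫⁻ _ in Set.Ioi (0:ℝ), 1 := by rw [setLIntegral_one]
        _ ≤ ∫⁻ σ in Set.Ioi (0:ℝ), min (G σ ^ (1 / q₀)) (G σ ^ (1 / qi)) :=
            setLIntegral_mono' measurableSet_Ioi hone
    refine ⟨f, 0, by simp, fun X => by simp, ?_, ?_⟩ <;> rw [hMtop] <;> exact le_top
end
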